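/- arXiv:2505.04000 — 3 statements merged into one kernel-verified Lean document; each statement's English description precedes it below -/
import Mathlib

section
/- The number of interval-closed sets of the poset [2] × [n] equals (n⁴ + 4n³ + 17n² + 14n + 12)/12, i.e., 1 + n + n² + ((n+1)/2)·C(n+2, 3). -/
open scoped Classical

/-- The poset `[2] × [n]`, as the finset of pairs `(i,j)` with `1 ≤ i ≤ 2`, `1 ≤ j ≤ n`,
ordered componentwise. -/
def twoByN (n : ℕ) : Finset (ℕ × ℕ) := Finset.Icc 1 2 ×ˢ Finset.Icc 1 n

/-- `I` is an interval-closed set of `[2] × [n]`: it is a subset of the poset, and for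
`x, y ∈ I` and `z` in the poset with `x ≤ z ≤ y` (componentwise) we have `z ∈ I`. -/
def IsICS (n : ℕ) (I : Finset (ℕ × ℕ)) : Prop :=
  I ⊆ twoByN n ∧ ∀ x ∈ I, ∀ y ∈ I, ∀ z ∈ twoByN n,
    x.1 ≤ z.1 → x.2 ≤ z.2 → z.1 ≤ y.1 → z.2 ≤ y.2 → z ∈ I

open Finset

lemma mem_twoByN {n : ℕ} {p : ℕ × ℕ} :
    p ∈ twoByN n ↔ 1 ≤ p.1 ∧ p.1 ≤ 2 ∧ 1 ≤ p.2 ∧ p.2 ≤ n := by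
  simp [twoByN, Finset.mem_Icc, Finset.mem_product, and_assoc]

def rowSet (I : Finset (ℕ × ℕ)) (i : ℕ) : Finset ℕ :=
  (I.filter (fun p => p.1 = i)).image Prod.snd

lemma mem_rowSet {I : Finset (ℕ × ℕ)} {i j : ℕ} : j ∈ rowSet I i ↔ (i, j) ∈ I := by
  simp only [rowSet, Finset.mem_image, Finset.mem_filter]
  constructor
  · rintro ⟨⟨pi, pj⟩, ⟨hmem, h1⟩, h2⟩
    simp only at h1 h2
    subst h1; subst h2; exact hmem
  · intro h; exact ⟨(i, j), ⟨h, rfl⟩, rfl⟩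

noncomputable def aOf (S : Finset ℕ) : ℕ := if h : S.Nonempty then S.min' h else 1

noncomputable def bOf (S : Finset ℕ) : ℕ := if h : S.Nonempty then S.max' h else 0

lemma aOf_Icc {a b : ℕ} (h : a ≤ b) : aOf (Finset.Icc a b) = a := by
  have hne : (Finset.Icc a b).Nonempty := ⟨a, by simp [h]⟩
  rw [aOf, dif_pos hne]
  refine le_antisymm (Finset.min'_le _ _ (by simp [h])) (Finset.le_min' _ _ _ ?_)
  intro x hx; exact (Finset.mem_Icc.1 hx).1

lemma bOf_Icc {a b : ℕ} (h : a ≤ b) : bOf (Finset.Icc a b) = b := by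
  have hne : (Finset.Icc a b).Nonempty := ⟨a, by simp [h]⟩
  rw [bOf, dif_pos hne]
  refine le_antisymm (Finset.max'_le _ _ _ ?_) (Finset.le_max' _ _ (by simp [h]))
  intro x hx; exact (Finset.mem_Icc.1 hx).2

lemma aOf_Icc_empty {a b : ℕ} (h : b < a) : aOf (Finset.Icc a b) = 1 := by
  rw [aOf, dif_neg]
  simp [Finset.Icc_eq_empty_of_lt h]

lemma bOf_Icc_empty {a b : ℕ} (h : b < a) : bOf (Finset.Icc a b) = 0 := by
  rw [bOf, dif_neg]
  simp [Finset.Icc_eq_empty_of_lt h]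

def gmap (q : (ℕ × ℕ) × ℕ × ℕ) : Finset (ℕ × ℕ) :=
  ({1} ×ˢ Finset.Icc q.1.1 q.1.2) ∪ ({2} ×ˢ Finset.Icc q.2.1 q.2.2)

lemma mem_gmap {q : (ℕ × ℕ) × ℕ × ℕ} {p : ℕ × ℕ} :
    p ∈ gmap q ↔ (p.1 = 1 ∧ q.1.1 ≤ p.2 ∧ p.2 ≤ q.1.2) ∨
      (p.1 = 2 ∧ q.2.1 ≤ p.2 ∧ p.2 ≤ q.2.2) := by
  simp only [gmap, Finset.mem_union, Finset.mem_product, Finset.mem_singleton,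
    Finset.mem_Icc, and_assoc]

def pcond (n : ℕ) (q : (ℕ × ℕ) × ℕ × ℕ) : Prop :=
  ((q.1.1 = 1 ∧ q.1.2 = 0) ∨ (1 ≤ q.1.1 ∧ q.1.1 ≤ q.1.2 ∧ q.1.2 ≤ n)) ∧
  ((q.2.1 = 1 ∧ q.2.2 = 0) ∨ (1 ≤ q.2.1 ∧ q.2.1 ≤ q.2.2 ∧ q.2.2 ≤ n)) ∧
  (q.1.2 = 0 ∨ q.2.2 = 0 ∨ (q.2.1 ≤ q.1.1 ∧ q.2.2 ≤ q.1.2))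

def Pdom (n : ℕ) : Finset ((ℕ × ℕ) × ℕ × ℕ) :=
  (Finset.Icc 0 (n+1) ×ˢ Finset.Icc 0 (n+1)) ×ˢ (Finset.Icc 0 (n+1) ×ˢ Finset.Icc 0 (n+1))

noncomputable def Pset (n : ℕ) : Finset ((ℕ × ℕ) × ℕ × ℕ) := (Pdom n).filter (pcond n)

lemma mem_Pset {n : ℕ} {q : (ℕ × ℕ) × ℕ × ℕ} : q ∈ Pset n ↔ pcond n q := by
  rw [Pset, Finset.mem_filter, and_iff_right_iff_imp]
  intro h
  obtain ⟨h1, h2, h3⟩ := h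
  simp only [Pdom, Finset.mem_product, Finset.mem_Icc]
  omega

lemma gmap_subset {n : ℕ} {q : (ℕ × ℕ) × ℕ × ℕ} (h : pcond n q) : gmap q ⊆ twoByN n := by
  obtain ⟨h1, h2, h3⟩ := h
  intro p hp
  rw [mem_gmap] at hp
  rw [mem_twoByN]
  omega

lemma gmap_ICS {n : ℕ} {q : (ℕ × ℕ) × ℕ × ℕ} (h : pcond n q) : IsICS n (gmap q) := by
  refine ⟨gmap_subset h, ?_⟩
  obtain ⟨h1, h2, h3⟩ := h
  intro x hx y hy z hz hxz1 hxz2 hzy1 hzy2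
  rw [mem_gmap] at hx hy ⊢
  rw [mem_twoByN] at hz
  omega

-- continuation
section Struct
variable {n : ℕ} {I : Finset (ℕ × ℕ)}

lemma row_mem_bounds (hI : I ⊆ twoByN n) {i j : ℕ} (h : j ∈ rowSet I i) :
    1 ≤ i ∧ i ≤ 2 ∧ 1 ≤ j ∧ j ≤ n :=
  mem_twoByN.1 (hI (mem_rowSet.1 h))

lemma row_bounds (hI : I ⊆ twoByN n) {i : ℕ} (h : (rowSet I i).Nonempty) :
    1 ≤ aOf (rowSet I i) ∧ aOf (rowSet I i) ≤ bOf (rowSet I i) ∧ bOf (rowSet I i) ≤ n := by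
  rw [aOf, bOf, dif_pos h, dif_pos h]
  exact ⟨(row_mem_bounds hI ((rowSet I i).min'_mem h)).2.2.1,
    Finset.min'_le _ _ ((rowSet I i).max'_mem h),
    (row_mem_bounds hI ((rowSet I i).max'_mem h)).2.2.2⟩

lemma ics_interval (h : IsICS n I) {i : ℕ} (hne : (rowSet I i).Nonempty) {j : ℕ}
    (h1 : aOf (rowSet I i) ≤ j) (h2 : j ≤ bOf (rowSet I i)) : (i, j) ∈ I := by
  obtain ⟨hA, hAB, hB⟩ := row_bounds h.1 hne
  rw [aOf, dif_pos hne] at h1 hA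
  rw [bOf, dif_pos hne] at h2 hB
  have hmin : (i, (rowSet I i).min' hne) ∈ I := mem_rowSet.1 ((rowSet I i).min'_mem hne)
  have hmax : (i, (rowSet I i).max' hne) ∈ I := mem_rowSet.1 ((rowSet I i).max'_mem hne)
  have hbi := (row_mem_bounds h.1 ((rowSet I i).min'_mem hne)).1
  have hbi2 := (row_mem_bounds h.1 ((rowSet I i).min'_mem hne)).2.1
  exact h.2 _ hmin _ hmax (i, j) (mem_twoByN.2 ⟨hbi, hbi2, le_trans hA h1, le_trans h2 hB⟩)
    (le_refl _) h1 (le_refl _) h2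

lemma ics_cross (h : IsICS n I) (h1 : (rowSet I 1).Nonempty) (h2 : (rowSet I 2).Nonempty) :
    aOf (rowSet I 2) ≤ aOf (rowSet I 1) ∧ bOf (rowSet I 2) ≤ bOf (rowSet I 1) := by
  obtain ⟨hA1, hAB1, hB1⟩ := row_bounds h.1 h1
  obtain ⟨hA2, hAB2, hB2⟩ := row_bounds h.1 h2
  rcases le_or_gt (aOf (rowSet I 1)) (bOf (rowSet I 2)) with hle | hlt
  · have hx : (1, aOf (rowSet I 1)) ∈ I := ics_interval h h1 (le_refl _) hAB1
    have hy : (2, bOf (rowSet I 2)) ∈ I := ics_interval h h2 hAB2 (le_refl _)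
    have hz1 : (2, aOf (rowSet I 1)) ∈ I :=
      h.2 _ hx _ hy _ (mem_twoByN.2 ⟨by omega, by omega, by omega, by omega⟩)
        (by omega) (le_refl _) (le_refl _) hle
    have hz2 : (1, bOf (rowSet I 2)) ∈ I :=
      h.2 _ hx _ hy _ (mem_twoByN.2 ⟨by omega, by omega, by omega, by omega⟩)
        (le_refl _) hle (by omega) (le_refl _)
    constructor
    · conv_lhs => rw [aOf, dif_pos h2]
      exact Finset.min'_le _ _ (mem_rowSet.2 hz1)
    · conv_rhs => rw [bOf, dif_pos h1]
      exact Finset.le_max' _ _ (mem_rowSet.2 hz2)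
  · omega
end Struct

-- part 3: the bijection
noncomputable def hmap (I : Finset (ℕ × ℕ)) : (ℕ × ℕ) × ℕ × ℕ :=
  ((aOf (rowSet I 1), bOf (rowSet I 1)), (aOf (rowSet I 2), bOf (rowSet I 2)))

lemma aOf_empty {S : Finset ℕ} (h : ¬ S.Nonempty) : aOf S = 1 := by rw [aOf, dif_neg h]
lemma bOf_empty {S : Finset ℕ} (h : ¬ S.Nonempty) : bOf S = 0 := by rw [bOf, dif_neg h]

lemma hmap_mem {n : ℕ} {I : Finset (ℕ × ℕ)} (h : IsICS n I) : hmap I ∈ Pset n := by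
  rw [mem_Pset]
  have hrow : ∀ i : ℕ, (aOf (rowSet I i) = 1 ∧ bOf (rowSet I i) = 0) ∨
      (1 ≤ aOf (rowSet I i) ∧ aOf (rowSet I i) ≤ bOf (rowSet I i) ∧ bOf (rowSet I i) ≤ n) := by
    intro i
    by_cases hne : (rowSet I i).Nonempty
    · exact Or.inr (row_bounds h.1 hne)
    · exact Or.inl ⟨aOf_empty hne, bOf_empty hne⟩
  refine ⟨hrow 1, hrow 2, ?_⟩
  by_cases h1 : (rowSet I 1).Nonempty
  · by_cases h2 : (rowSet I 2).Nonempty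
    · exact Or.inr (Or.inr (ics_cross h h1 h2))
    · exact Or.inr (Or.inl (bOf_empty h2))
  · exact Or.inl (bOf_empty h1)

lemma gmap_hmap {n : ℕ} {I : Finset (ℕ × ℕ)} (h : IsICS n I) : gmap (hmap I) = I := by
  ext ⟨pi, pj⟩
  rw [mem_gmap]
  simp only [hmap]
  constructor
  · rintro (⟨rfl, hj1, hj2⟩ | ⟨rfl, hj1, hj2⟩)
    · by_cases hne : (rowSet I 1).Nonempty
      · exact ics_interval h hne hj1 hj2
      · rw [aOf_empty hne] at hj1; rw [bOf_empty hne] at hj2; omega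
    · by_cases hne : (rowSet I 2).Nonempty
      · exact ics_interval h hne hj1 hj2
      · rw [aOf_empty hne] at hj1; rw [bOf_empty hne] at hj2; omega
  · intro hmem
    have hb := mem_twoByN.1 (h.1 hmem)
    simp only at hb
    have hi : pi = 1 ∨ pi = 2 := by omega
    rcases hi with rfl | rfl
    · have hj : pj ∈ rowSet I 1 := mem_rowSet.2 hmem
      have hne : (rowSet I 1).Nonempty := ⟨pj, hj⟩
      refine Or.inl ⟨rfl, ?_, ?_⟩
      · rw [aOf, dif_pos hne]; exact Finset.min'_le _ _ hj
      · rw [bOf, dif_pos hne]; exact Finset.le_max' _ _ hj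
    · have hj : pj ∈ rowSet I 2 := mem_rowSet.2 hmem
      have hne : (rowSet I 2).Nonempty := ⟨pj, hj⟩
      refine Or.inr ⟨rfl, ?_, ?_⟩
      · rw [aOf, dif_pos hne]; exact Finset.min'_le _ _ hj
      · rw [bOf, dif_pos hne]; exact Finset.le_max' _ _ hj

lemma rowSet_gmap1 (q : (ℕ × ℕ) × ℕ × ℕ) : rowSet (gmap q) 1 = Finset.Icc q.1.1 q.1.2 := by
  ext j
  rw [mem_rowSet, mem_gmap, Finset.mem_Icc]
  simp

lemma rowSet_gmap2 (q : (ℕ × ℕ) × ℕ × ℕ) : rowSet (gmap q) 2 = Finset.Icc q.2.1 q.2.2 := by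
  ext j
  rw [mem_rowSet, mem_gmap, Finset.mem_Icc]
  simp

lemma hmap_gmap {n : ℕ} {q : (ℕ × ℕ) × ℕ × ℕ} (h : pcond n q) : hmap (gmap q) = q := by
  obtain ⟨h1, h2, _⟩ := h
  have key : ∀ a b : ℕ, (a = 1 ∧ b = 0) ∨ (1 ≤ a ∧ a ≤ b ∧ b ≤ n) →
      (aOf (Finset.Icc a b), bOf (Finset.Icc a b)) = (a, b) := by
    rintro a b (⟨rfl, rfl⟩ | ⟨_, hab, _⟩)
    · rw [aOf_Icc_empty (by omega), bOf_Icc_empty (by omega)]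
    · rw [aOf_Icc hab, bOf_Icc hab]
  have k1 := key _ _ h1
  have k2 := key _ _ h2
  rw [hmap, rowSet_gmap1, rowSet_gmap2, k1, k2]

theorem card_ICS_eq_Pset (n : ℕ) :
    ((twoByN n).powerset.filter (fun I => IsICS n I)).card = (Pset n).card := by
  refine Finset.card_bij' (fun I _ => hmap I) (fun q _ => gmap q) ?_ ?_ ?_ ?_
  · intro I hI
    rw [Finset.mem_filter] at hI
    exact hmap_mem hI.2
  · intro q hq
    rw [mem_Pset] at hq
    rw [Finset.mem_filter, Finset.mem_powerset]
    exact ⟨gmap_subset hq, gmap_ICS hq⟩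
  · intro I hI
    rw [Finset.mem_filter] at hI
    exact gmap_hmap hI.2
  · intro q hq
    rw [mem_Pset] at hq
    exact hmap_gmap hq

-- part 4: counting Pset
def Tset (n : ℕ) : Finset (ℕ × ℕ) :=
  (Finset.Icc 1 n).biUnion (fun a => {a} ×ˢ Finset.Icc a n)

lemma mem_Tset {n : ℕ} {p : ℕ × ℕ} : p ∈ Tset n ↔ 1 ≤ p.1 ∧ p.1 ≤ p.2 ∧ p.2 ≤ n := by
  simp only [Tset, Finset.mem_biUnion, Finset.mem_product, Finset.mem_singleton,
    Finset.mem_Icc]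
  constructor
  · rintro ⟨a, ha, hp⟩; omega
  · intro h; exact ⟨p.1, by omega, rfl, by omega⟩

def Bset (n : ℕ) : Finset ((ℕ × ℕ) × ℕ × ℕ) :=
  (Tset n).biUnion (fun p => (Finset.Icc p.1 p.2 ×ˢ Finset.Icc p.1 p.2).image
    (fun r => ((r.1, p.2), (p.1, r.2))))

lemma mem_Bset {n : ℕ} {q : (ℕ × ℕ) × ℕ × ℕ} :
    q ∈ Bset n ↔ 1 ≤ q.2.1 ∧ q.2.1 ≤ q.1.1 ∧ q.1.1 ≤ q.1.2 ∧ q.1.2 ≤ n ∧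
      q.2.1 ≤ q.2.2 ∧ q.2.2 ≤ q.1.2 := by
  simp only [Bset, Finset.mem_biUnion, Finset.mem_image, Finset.mem_product, Finset.mem_Icc,
    mem_Tset]
  constructor
  · rintro ⟨p, hp, r, hr, rfl⟩
    simp only
    omega
  · intro h
    refine ⟨(q.2.1, q.1.2), by omega, (q.1.1, q.2.2), by omega, ?_⟩
    exact Prod.ext (Prod.ext rfl rfl) (Prod.ext rfl rfl)

lemma Pset_decomp (n : ℕ) :
    Pset n = ({((1,0),(1,0))} : Finset ((ℕ × ℕ) × ℕ × ℕ)) ∪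
      (Tset n).image (fun p => (p, ((1:ℕ), (0:ℕ)))) ∪
      (Tset n).image (fun p => (((1:ℕ), (0:ℕ)), p)) ∪ Bset n := by
  ext ⟨⟨a1, b1⟩, a2, b2⟩
  rw [Finset.mem_union, Finset.mem_union, Finset.mem_union, mem_Pset, mem_Bset,
    Finset.mem_singleton]
  have himg1 : (((a1, b1), a2, b2) ∈ (Tset n).image (fun p => (p, ((1:ℕ), (0:ℕ))))) ↔
      (1 ≤ a1 ∧ a1 ≤ b1 ∧ b1 ≤ n ∧ a2 = 1 ∧ b2 = 0) := by
    simp only [Finset.mem_image, mem_Tset, Prod.mk.injEq]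
    constructor
    · rintro ⟨⟨x, y⟩, hp, heq⟩
      simp only [Prod.mk.injEq] at heq
      omega
    · rintro ⟨h1, h2, h3, rfl, rfl⟩
      exact ⟨(a1, b1), ⟨h1, h2, h3⟩, rfl, rfl, rfl⟩
  have himg2 : (((a1, b1), a2, b2) ∈ (Tset n).image (fun p => (((1:ℕ), (0:ℕ)), p))) ↔
      (1 ≤ a2 ∧ a2 ≤ b2 ∧ b2 ≤ n ∧ a1 = 1 ∧ b1 = 0) := by
    simp only [Finset.mem_image, mem_Tset, Prod.mk.injEq]
    constructor
    · rintro ⟨⟨x, y⟩, hp, heq⟩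
      simp only [Prod.mk.injEq] at heq
      omega
    · rintro ⟨h1, h2, h3, rfl, rfl⟩
      exact ⟨(a2, b2), ⟨h1, h2, h3⟩, ⟨rfl, rfl⟩, rfl⟩
  rw [himg1, himg2]
  simp only [pcond, Prod.mk.injEq]
  omega

-- part 5: cardinalities
def Tnum (n : ℕ) : ℕ := ∑ a ∈ Finset.Icc 1 n, (n + 1 - a)
def Unum (n : ℕ) : ℕ := ∑ a ∈ Finset.Icc 1 n, (n + 1 - a) * (n + 1 - a)
def Wnum (n : ℕ) : ℕ := ∑ a ∈ Finset.Icc 1 n, ∑ b ∈ Finset.Icc a n, (b + 1 - a) * (b + 1 - a)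

lemma card_Tset (n : ℕ) : (Tset n).card = Tnum n := by
  rw [Tset, Finset.card_biUnion]
  · refine Finset.sum_congr rfl fun a _ => ?_
    rw [Finset.card_product, Finset.card_singleton, Nat.card_Icc, one_mul]
  · intro x _ y _ hxy
    rw [Function.onFun, Finset.disjoint_left]
    rintro ⟨p1, p2⟩ hp hq
    rw [Finset.mem_product, Finset.mem_singleton] at hp hq
    exact hxy (hp.1 ▸ hq.1 ▸ rfl)

lemma card_Bset (n : ℕ) : (Bset n).card = Wnum n := by
  rw [Bset, Finset.card_biUnion]
  · rw [Wnum, Tset, Finset.sum_biUnion]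
    · refine Finset.sum_congr rfl fun a ha => ?_
      rw [Finset.sum_product, Finset.sum_singleton]
      refine Finset.sum_congr rfl fun b hb => ?_
      rw [Finset.card_image_of_injective _ ?_, Finset.card_product, Nat.card_Icc]
      · intro r s hrs
        simp only [Prod.mk.injEq] at hrs
        exact Prod.ext hrs.1.1 hrs.2.2
    · intro x _ y _ hxy
      rw [Function.onFun, Finset.disjoint_left]
      rintro ⟨p1, p2⟩ hp hq
      rw [Finset.mem_product, Finset.mem_singleton] at hp hq
      exact hxy (hp.1 ▸ hq.1 ▸ rfl)
  · intro x hx y hy hxy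
    rw [Function.onFun, Finset.disjoint_left]
    rintro q hq hq'
    rw [Finset.mem_image] at hq hq'
    obtain ⟨r, _, rfl⟩ := hq
    obtain ⟨s, _, heq⟩ := hq'
    simp only [Prod.mk.injEq] at heq
    exact hxy (Prod.ext heq.2.1.symm heq.1.2.symm)

lemma Tnum_succ (n : ℕ) : Tnum (n+1) = Tnum n + (n+1) := by
  simp only [Tnum]
  rw [Finset.sum_Icc_succ_top (by omega)]
  rw [show ∑ a ∈ Finset.Icc 1 n, (n + 1 + 1 - a) =
        ∑ a ∈ Finset.Icc 1 n, ((n + 1 - a) + 1) from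
      Finset.sum_congr rfl fun a ha => by rw [Finset.mem_Icc] at ha; omega]
  rw [Finset.sum_add_distrib, Finset.sum_const, Nat.card_Icc, smul_eq_mul, mul_one]
  omega

lemma hT (n : ℕ) : 2 * Tnum n = n * (n + 1) := by
  induction n with
  | zero => simp [Tnum]
  | succ n ih =>
    rw [Tnum_succ]
    zify at ih ⊢
    linear_combination ih

lemma Unum_succ (n : ℕ) : Unum (n+1) = Unum n + 2 * Tnum n + n + 1 := by
  simp only [Unum, Tnum]
  rw [Finset.sum_Icc_succ_top (by omega)]
  rw [show ∑ a ∈ Finset.Icc 1 n, (n + 1 + 1 - a) * (n + 1 + 1 - a) =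
      ∑ a ∈ Finset.Icc 1 n, ((n + 1 - a) * (n + 1 - a) + 2 * (n + 1 - a) + 1) from
    Finset.sum_congr rfl fun a ha => by
      rw [Finset.mem_Icc] at ha
      rw [show n + 1 + 1 - a = (n + 1 - a) + 1 from by omega]
      ring]
  rw [Finset.sum_add_distrib, Finset.sum_add_distrib, Finset.sum_const, Nat.card_Icc,
    smul_eq_mul, mul_one, ← Finset.mul_sum]
  rw [show n + 1 + 1 - (n + 1) = 1 from by omega]
  omega

lemma hU (n : ℕ) : 6 * Unum n = n * (n + 1) * (2 * n + 1) := by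
  induction n with
  | zero => simp [Unum]
  | succ n ih =>
    rw [Unum_succ]
    have h := hT n
    zify at ih h ⊢
    linear_combination ih + 6 * h

lemma Wnum_succ (n : ℕ) : Wnum (n+1) = Wnum n + Unum (n+1) := by
  simp only [Wnum, Unum]
  rw [Finset.sum_Icc_succ_top (by omega)]
  rw [show ∑ a ∈ Finset.Icc 1 n, ∑ b ∈ Finset.Icc a (n+1), (b + 1 - a) * (b + 1 - a) =
      ∑ a ∈ Finset.Icc 1 n, ((∑ b ∈ Finset.Icc a n, (b + 1 - a) * (b + 1 - a)) +
        (n + 1 + 1 - a) * (n + 1 + 1 - a)) from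
    Finset.sum_congr rfl fun a ha => by
      rw [Finset.mem_Icc] at ha
      rw [Finset.sum_Icc_succ_top (by omega)]]
  rw [Finset.sum_add_distrib]
  rw [Finset.sum_Icc_succ_top (f := fun a => (n + 1 + 1 - a) * (n + 1 + 1 - a)) (by omega)]
  rw [Finset.Icc_self, Finset.sum_singleton]
  rw [show n + 1 + 1 - (n + 1) = 1 from by omega]
  omega

lemma hW (n : ℕ) : 12 * Wnum n = n * (n + 1) * (n + 1) * (n + 2) := by
  induction n with
  | zero => simp [Wnum]
  | succ n ih =>
    rw [Wnum_succ]
    have h := hU (n + 1)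
    zify at ih h ⊢
    linear_combination ih + 2 * h

lemma card_Pset (n : ℕ) : (Pset n).card = 1 + Tnum n + Tnum n + Wnum n := by
  rw [Pset_decomp]
  rw [Finset.card_union_of_disjoint, Finset.card_union_of_disjoint,
    Finset.card_union_of_disjoint]
  · rw [Finset.card_singleton, Finset.card_image_of_injective _ (fun u v h => by
      simpa using congrArg Prod.fst h),
      Finset.card_image_of_injective _ (fun u v h => by
      simpa using congrArg Prod.snd h), card_Tset, card_Bset]
  · rw [Finset.disjoint_left]
    rintro ⟨⟨a1, b1⟩, a2, b2⟩ hp hq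
    rw [Finset.mem_singleton, Prod.mk.injEq, Prod.mk.injEq, Prod.mk.injEq] at hp
    rw [Finset.mem_image] at hq
    obtain ⟨⟨x, y⟩, hx, heq⟩ := hq
    rw [mem_Tset] at hx
    simp only [Prod.mk.injEq] at heq
    omega
  · rw [Finset.disjoint_left]
    rintro ⟨⟨a1, b1⟩, a2, b2⟩ hp hq
    rw [Finset.mem_union, Finset.mem_singleton] at hp
    rw [Finset.mem_image] at hq
    obtain ⟨⟨x, y⟩, hx, heq⟩ := hq
    rw [mem_Tset] at hx
    simp only [Prod.mk.injEq] at heq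
    rcases hp with hp | hp
    · rw [Prod.mk.injEq, Prod.mk.injEq, Prod.mk.injEq] at hp
      omega
    · rw [Finset.mem_image] at hp
      obtain ⟨⟨x', y'⟩, hx', heq'⟩ := hp
      rw [mem_Tset] at hx'
      simp only [Prod.mk.injEq] at heq'
      omega
  · rw [Finset.disjoint_left]
    rintro ⟨⟨a1, b1⟩, a2, b2⟩ hp hq
    rw [mem_Bset] at hq
    simp only at hq
    rw [Finset.mem_union, Finset.mem_union, Finset.mem_singleton] at hp
    rcases hp with (hp | hp) | hp
    · rw [Prod.mk.injEq, Prod.mk.injEq, Prod.mk.injEq] at hp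
      omega
    · rw [Finset.mem_image] at hp
      obtain ⟨⟨x', y'⟩, hx', heq'⟩ := hp
      rw [mem_Tset] at hx'
      simp only [Prod.mk.injEq] at heq'
      omega
    · rw [Finset.mem_image] at hp
      obtain ⟨⟨x', y'⟩, hx', heq'⟩ := hp
      rw [mem_Tset] at hx'
      simp only [Prod.mk.injEq] at heq'
      omega


/-- The number of interval-closed sets of `[2] × [n]` is
`(n⁴ + 4n³ + 17n² + 14n + 12)/12`. -/
theorem count_ICS (n : ℕ) :
    12 * ((twoByN n).powerset.filter (fun I => IsICS n I)).card =
      n ^ 4 + 4 * n ^ 3 + 17 * n ^ 2 + 14 * n + 12 := by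
  rw [card_ICS_eq_Pset, card_Pset]
  have h1 := hT n
  have h2 := hW n
  zify at h1 h2 ⊢
  linear_combination 12 * h1 + h2
end

section
/- Let n ≥ 2. A tuple (b₁, i₁, a₁, b₂, i₂, a₂) of nonnegative integers with i₁ > 0 and i₂ > 0 parametrizes an interval-closed set of [2] × [n] (where the lower chain interval occupies positions b₁+1 through b₁+i₁ and the upper chain interval occupies positions b₂+1 through b₂+i₂) if and only if b₁ + i₁ + a₁ = n, b₂ + i₂ + a₂ = n, b₁ ≥ b₂, and a₂ ≥ a₁. -/
/-- For `n ≥ 2`, a tuple `(b₁, i₁, a₁, b₂, i₂, a₂)` of nonnegative integers with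
`i₁, i₂ > 0` (where `a₁ = n - b₁ - i₁` and `a₂ = n - b₂ - i₂` count elements above the
two intervals) parametrizes an interval-closed set
`{(1,j) : b₁ < j ≤ b₁+i₁} ∪ {(2,j) : b₂ < j ≤ b₂+i₂}` of `[2] × [n]` if and only if
`b₁ + i₁ + a₁ = n`, `b₂ + i₂ + a₂ = n`, `b₁ ≥ b₂`, and `a₂ ≥ a₁`. -/
theorem param_ICS_iff (n b₁ i₁ a₁ b₂ i₂ a₂ : ℕ) (hn : 2 ≤ n)
    (hi₁ : 0 < i₁) (hi₂ : 0 < i₂)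
    (hs₁ : b₁ + i₁ + a₁ = n) (hs₂ : b₂ + i₂ + a₂ = n) :
    IsICS n (((Finset.Ioc b₁ (b₁ + i₁)).image fun j => ((1 : ℕ), j)) ∪
        ((Finset.Ioc b₂ (b₂ + i₂)).image fun j => ((2 : ℕ), j))) ↔
      (b₁ + i₁ + a₁ = n ∧ b₂ + i₂ + a₂ = n ∧ b₂ ≤ b₁ ∧ a₁ ≤ a₂) := by
  set I := (((Finset.Ioc b₁ (b₁ + i₁)).image fun j => ((1 : ℕ), j)) ∪
        ((Finset.Ioc b₂ (b₂ + i₂)).image fun j => ((2 : ℕ), j))) with hI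
  have hmem : ∀ p : ℕ × ℕ, p ∈ I ↔
      (p.1 = 1 ∧ b₁ < p.2 ∧ p.2 ≤ b₁ + i₁) ∨ (p.1 = 2 ∧ b₂ < p.2 ∧ p.2 ≤ b₂ + i₂) := by
    intro p
    simp only [hI, Finset.mem_union, Finset.mem_image, Finset.mem_Ioc, Prod.ext_iff]
    constructor
    · rintro (⟨j, ⟨hj1, hj2⟩, h1, h2⟩ | ⟨j, ⟨hj1, hj2⟩, h1, h2⟩) <;> [left; right] <;> omega
    · rintro (⟨h1, h2, h3⟩ | ⟨h1, h2, h3⟩)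
      · exact Or.inl ⟨p.2, ⟨h2, h3⟩, h1.symm, rfl⟩
      · exact Or.inr ⟨p.2, ⟨h2, h3⟩, h1.symm, rfl⟩
  have htwo : ∀ p : ℕ × ℕ, p ∈ twoByN n ↔ (1 ≤ p.1 ∧ p.1 ≤ 2 ∧ 1 ≤ p.2 ∧ p.2 ≤ n) := by
    intro p
    simp [twoByN, Finset.mem_product, Finset.mem_Icc, and_assoc]
  constructor
  · rintro ⟨hsub, hclose⟩
    refine ⟨hs₁, hs₂, ?_, ?_⟩
    · -- b₂ ≤ b₁
      by_contra h
      push_neg at h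
      have hx : ((1:ℕ), b₁+1) ∈ I := by rw [hmem]; left; omega
      have hy : ((2:ℕ), b₂+i₂) ∈ I := by rw [hmem]; right; omega
      have hz : ((2:ℕ), b₁+1) ∈ twoByN n := by rw [htwo]; simp; omega
      have := hclose _ hx _ hy _ hz (by simp) (by simp) (by simp) (by simp; omega)
      rw [hmem] at this
      simp at this
      omega
    · -- a₁ ≤ a₂
      rcases le_or_gt (b₂ + i₂) (b₁ + 1) with hle | hlt
      · omega
      have hx : ((1:ℕ), b₁+1) ∈ I := by rw [hmem]; left; omega
      have hy : ((2:ℕ), b₂+i₂) ∈ I := by rw [hmem]; right; omega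
      have hz : ((1:ℕ), b₂+i₂) ∈ twoByN n := by rw [htwo]; simp; omega
      have := hclose _ hx _ hy _ hz (by simp) (by simp; omega) (by simp) (by simp)
      rw [hmem] at this
      simp at this
      omega
  · rintro ⟨-, -, hb, ha⟩
    have hii : b₂ + i₂ ≤ b₁ + i₁ := by omega
    constructor
    · intro p hp
      rw [hmem] at hp
      rw [htwo]
      rcases hp with ⟨h1, h2, h3⟩ | ⟨h1, h2, h3⟩ <;> omega
    · intro x hx y hy z hz h1 h2 h3 h4
      rw [hmem] at hx hy ⊢
      rw [htwo] at hz
      rcases hx with ⟨hx1, hx2, hx3⟩ | ⟨hx1, hx2, hx3⟩ <;>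
        rcases hy with ⟨hy1, hy2, hy3⟩ | ⟨hy1, hy2, hy3⟩ <;> omega
end

section
/- Every interval-closed set of [2] × [n] that is neither empty nor the full poset belongs to exactly one of the following six types, where the ICS is parametrized as [b₁,i₁,a₁ : b₂,i₂,a₂] with i₁, i₂ counting elements on the lower/upper chain: (1) Double Hook: i₁,i₂ > 0 and b₂ < b₁ < b₂+i₂ < b₁+i₁; (2) Disjoint: i₁,i₂ > 0 and b₂+i₂ ≤ b₁; (3) First Hook: i₁,i₂ > 0, b₁ = b₂ and a₁ < a₂; (4) Stacked Diagonals/Second Hook: i₁,i₂ > 0, a₁ = a₂ and b₂ ≤ b₁; (5) Low: i₂ = 0 (the ICS lies entirely on the lower chain); (6) High: i₁ = 0 (the ICS lies entirely on the upper chain). -/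
private lemma vec6_cases (P0 P1 P2 P3 P4 P5 : Prop) (k : Fin 6)
    (h : ![P0, P1, P2, P3, P4, P5] k) :
    (k = 0 ∧ P0) ∨ (k = 1 ∧ P1) ∨ (k = 2 ∧ P2) ∨ (k = 3 ∧ P3) ∨ (k = 4 ∧ P4) ∨ (k = 5 ∧ P5) := by
  fin_cases k
  · exact Or.inl ⟨rfl, h⟩
  · exact Or.inr (Or.inl ⟨rfl, h⟩)
  · exact Or.inr (Or.inr (Or.inl ⟨rfl, h⟩))
  · exact Or.inr (Or.inr (Or.inr (Or.inl ⟨rfl, h⟩)))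
  · exact Or.inr (Or.inr (Or.inr (Or.inr (Or.inl ⟨rfl, h⟩))))
  · exact Or.inr (Or.inr (Or.inr (Or.inr (Or.inr ⟨rfl, h⟩))))

/-- Every interval-closed set of `[2] × [n]` that is neither empty nor the full poset,
parametrized as `[b₁,i₁,a₁ : b₂,i₂,a₂]` (with the conventions `i₁ = 0 → b₁ = n, a₁ = 0`
and `i₂ = 0 → b₂ = 0, a₂ = n`), belongs to exactly one of the six types:
(1) Double Hook, (2) Disjoint, (3) First Hook, (4) Stacked Diagonals/Second Hook,
(5) Low (`i₂ = 0`), (6) High (`i₁ = 0`). -/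
theorem ICS_six_types (n b₁ i₁ a₁ b₂ i₂ a₂ : ℕ)
    (hs₁ : b₁ + i₁ + a₁ = n) (hs₂ : b₂ + i₂ + a₂ = n)
    (hhigh : i₁ = 0 → b₁ = n ∧ a₁ = 0) (hlow : i₂ = 0 → b₂ = 0 ∧ a₂ = n)
    (hcomp : 0 < i₁ → 0 < i₂ → b₂ ≤ b₁ ∧ a₁ ≤ a₂)
    (hne : ¬(i₁ = 0 ∧ i₂ = 0)) (hnf : ¬(i₁ = n ∧ i₂ = n)) :
    ∃! k : Fin 6,
      ![0 < i₁ ∧ 0 < i₂ ∧ b₂ < b₁ ∧ b₁ < b₂ + i₂ ∧ b₂ + i₂ < b₁ + i₁,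
        0 < i₁ ∧ 0 < i₂ ∧ b₂ + i₂ ≤ b₁,
        0 < i₁ ∧ 0 < i₂ ∧ b₁ = b₂ ∧ a₁ < a₂,
        0 < i₁ ∧ 0 < i₂ ∧ a₁ = a₂ ∧ b₂ ≤ b₁,
        i₂ = 0,
        i₁ = 0] k := by
  obtain h2 | h2 := Nat.eq_zero_or_pos i₂
  · obtain ⟨hb0, han⟩ := hlow h2
    refine ⟨4, h2, ?_⟩
    intro y hy
    rcases vec6_cases _ _ _ _ _ _ y hy with ⟨rfl, h⟩ | ⟨rfl, h⟩ | ⟨rfl, h⟩ | ⟨rfl, h⟩ | ⟨rfl, h⟩ | ⟨rfl, h⟩ <;>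
      first | rfl | exact absurd h (by omega)
  obtain h1 | h1 := Nat.eq_zero_or_pos i₁
  · obtain ⟨hbn, ha0⟩ := hhigh h1
    refine ⟨5, h1, ?_⟩
    intro y hy
    rcases vec6_cases _ _ _ _ _ _ y hy with ⟨rfl, h⟩ | ⟨rfl, h⟩ | ⟨rfl, h⟩ | ⟨rfl, h⟩ | ⟨rfl, h⟩ | ⟨rfl, h⟩ <;>
      first | rfl | exact absurd h (by omega)
  obtain ⟨hb, ha⟩ := hcomp h1 h2
  by_cases hd : b₂ + i₂ ≤ b₁
  · refine ⟨1, ⟨h1, h2, hd⟩, ?_⟩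
    intro y hy
    rcases vec6_cases _ _ _ _ _ _ y hy with ⟨rfl, h⟩ | ⟨rfl, h⟩ | ⟨rfl, h⟩ | ⟨rfl, h⟩ | ⟨rfl, h⟩ | ⟨rfl, h⟩ <;>
      first | rfl | exact absurd h (by omega)
  push_neg at hd
  by_cases hdh : b₂ < b₁ ∧ b₂ + i₂ < b₁ + i₁
  · refine ⟨0, ⟨h1, h2, hdh.1, hd, hdh.2⟩, ?_⟩
    intro y hy
    rcases vec6_cases _ _ _ _ _ _ y hy with ⟨rfl, h⟩ | ⟨rfl, h⟩ | ⟨rfl, h⟩ | ⟨rfl, h⟩ | ⟨rfl, h⟩ | ⟨rfl, h⟩ <;>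
      first | rfl | exact absurd h (by omega)
  by_cases hea : a₁ = a₂
  · refine ⟨3, ⟨h1, h2, hea, hb⟩, ?_⟩
    intro y hy
    rcases vec6_cases _ _ _ _ _ _ y hy with ⟨rfl, h⟩ | ⟨rfl, h⟩ | ⟨rfl, h⟩ | ⟨rfl, h⟩ | ⟨rfl, h⟩ | ⟨rfl, h⟩ <;>
      first | rfl | exact absurd h (by omega)
  · have heb : b₁ = b₂ := by omega
    have hlt : a₁ < a₂ := by omega
    refine ⟨2, ⟨h1, h2, heb, hlt⟩, ?_⟩
    intro y hy
    rcases vec6_cases _ _ _ _ _ _ y hy with ⟨rfl, h⟩ | ⟨rfl, h⟩ | ⟨rfl, h⟩ | ⟨rfl, h⟩ | ⟨rfl, h⟩ | ⟨rfl, h⟩ <;>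
      first | rfl | exact absurd h (by omega)
end
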